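/- arXiv:2404.08578 — 2 statements merged into one kernel-verified Lean document; each statement's English description precedes it below -/
import Mathlib

section
/- Let j*: T → S be an essentially surjective exact functor of triangulated categories admitting a fully faithful exact right adjoint j_*: S → T which preserves small coproducts, and let (A,B) be a t-structure on T such that (j*A, j*B) is a t-structure on S. If (A,B) is compactly generated, then (j*A, j*B) is compactly generated; moreover, if a collection P of compact objects generates the aisle A, then j*P compactly generates the aisle j*A. -/
open CategoryTheory Limits Pretriangulated AlgebraicGeometry

universe v u
section Tstr

variable {D : Type u} [Category.{v} D] [Preadditive D] [HasZeroObject D] [HasShift D ℤ]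
  [∀ n : ℤ, (shiftFunctor D n).Additive] [Pretriangulated D]

/-- The right orthogonal of a collection of objects. -/
def perpSet (A : Set D) : Set D := {Y | ∀ X ∈ A, ∀ f : X ⟶ Y, f = 0}

/-- `(A, B)` is a t-structure on the (strictly full triangulated) subcategory `S`
of the ambient pretriangulated category: orthogonality (`Hom(A, B[-1]) = 0`),
stability of `A` (resp. `B`) under positive (resp. negative) shifts, and existence
of truncation triangles for every object of `S`. -/
structure IsTStructureOn (S A B : Set D) : Prop where
  subset_A : A ⊆ S
  subset_B : B ⊆ S
  iso_closed_A : ∀ {E F : D}, (E ≅ F) → E ∈ A → F ∈ A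
  iso_closed_B : ∀ {E F : D}, (E ≅ F) → E ∈ B → F ∈ B
  shift_A : ∀ E ∈ A, E⟦(1 : ℤ)⟧ ∈ A
  shift_B : ∀ E ∈ B, E⟦(-1 : ℤ)⟧ ∈ B
  hom_zero : ∀ E ∈ A, ∀ F : D, F⟦(1 : ℤ)⟧ ∈ B → ∀ f : E ⟶ F, f = 0
  exists_triangle : ∀ E ∈ S, ∃ (a b : D) (_ : a ∈ A) (_ : b⟦(1 : ℤ)⟧ ∈ B)
    (f : a ⟶ E) (g : E ⟶ b) (h : b ⟶ a⟦(1 : ℤ)⟧), Triangle.mk f g h ∈ distTriang D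

/-- `(A, B)` is a t-structure on the ambient category. -/
def IsTStructure (A B : Set D) : Prop := IsTStructureOn Set.univ A B

/-- The t-structure `(A, B)` restricts to the triangulated subcategory `S`:
`(A ∩ S, B ∩ S)` is a t-structure on `S`. -/
def RestrictsTo (A B S : Set D) : Prop := IsTStructureOn S (A ∩ S) (B ∩ S)

/-- The coaisle `A^⊥[1]` associated to an aisle `A` (so that `(A, coaisleOf A)` is the
t-structure generated by the aisle `A`, when `A` is an aisle). -/
def coaisleOf (A : Set D) : Set D := {Y : D | ∀ X ∈ A, ∀ f : X ⟶ Y⟦(-1 : ℤ)⟧, f = 0}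

/-- The coaisle `A^⊥[1]`, relative to an ambient triangulated subcategory `S`. -/
def coaisleIn (S A : Set D) : Set D :=
  {Y : D | Y ∈ S ∧ ∀ X ∈ A, ∀ f : X ⟶ Y⟦(-1 : ℤ)⟧, f = 0}

/-- A subset `T` of `S` is a cocomplete preaisle in `S`: strictly full (within `S`),
closed under positive shifts, extensions and small coproducts (taken in the ambient
category, with vertices in `S`). -/
structure IsCocompletePreaisleIn (S T : Set D) : Prop where
  subset : T ⊆ S
  iso_closed : ∀ {E F : D}, (E ≅ F) → F ∈ S → E ∈ T → F ∈ T
  shift : ∀ E ∈ T, E⟦(1 : ℤ)⟧ ∈ T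
  ext : ∀ Tr ∈ distTriang D, Tr.obj₁ ∈ T → Tr.obj₃ ∈ T → Tr.obj₂ ∈ S → Tr.obj₂ ∈ T
  coprod : ∀ (ι : Type v) (f : ι → D), (∀ i, f i ∈ T) → ∀ c : Cofan f, IsColimit c →
    c.pt ∈ S → c.pt ∈ T

/-- The smallest cocomplete preaisle of `S` containing `P`; for `S = Set.univ` this
is `⟨P⟩^{≤0}`, the smallest cocomplete preaisle containing `P`. -/
def cocompletePreaisleClosureIn (S P : Set D) : Set D :=
  ⋂₀ {T : Set D | P ⊆ T ∧ IsCocompletePreaisleIn S T}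

/-- `⟨P⟩^{≤0}`: the smallest cocomplete preaisle containing `P`. -/
def cocompletePreaisleClosure (P : Set D) : Set D :=
  cocompletePreaisleClosureIn Set.univ P

/-- `Coprod(P)`: the smallest strictly full subcategory containing `P` which is closed
under extensions and small coproducts. -/
def coprodClosure (P : Set D) : Set D :=
  ⋂₀ {T : Set D | P ⊆ T ∧ (∀ {E F : D}, (E ≅ F) → E ∈ T → F ∈ T) ∧
    (∀ Tr ∈ distTriang D, Tr.obj₁ ∈ T → Tr.obj₃ ∈ T → Tr.obj₂ ∈ T) ∧
    (∀ (ι : Type v) (f : ι → D), (∀ i, f i ∈ T) → ∀ c : Cofan f, IsColimit c → c.pt ∈ T)}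

/-- `P` is a compact object relative to the (coproduct-closed) subcategory `S`:
`Hom(P, -)` commutes with small coproducts of objects of `S`. -/
def IsCompactIn (S : Set D) (P : D) : Prop :=
  P ∈ S ∧ ∀ (ι : Type v) (f : ι → D), (∀ i, f i ∈ S) → ∀ c : Cofan f, IsColimit c → c.pt ∈ S →
    (∀ g : P ⟶ c.pt, ∃ (s : Finset ι) (k : (i : ι) → (P ⟶ f i)),
        g = ∑ i ∈ s, k i ≫ c.inj i) ∧
    (∀ (s : Finset ι) (k : (i : ι) → (P ⟶ f i)),
        (∑ i ∈ s, k i ≫ c.inj i) = 0 → ∀ i ∈ s, k i = 0)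

/-- A compact object of the ambient category:  `Hom(P, -)` commutes with small
coproducts. -/
def IsCompactObj (P : D) : Prop := IsCompactIn Set.univ P

/-- `A` is an aisle: a strictly full preaisle whose inclusion admits a right adjoint. -/
structure IsAisle (A : Set D) : Prop where
  iso_closed : ∀ {E F : D}, (E ≅ F) → E ∈ A → F ∈ A
  shift : ∀ E ∈ A, E⟦(1 : ℤ)⟧ ∈ A
  ext : ∀ Tr ∈ distTriang D, Tr.obj₁ ∈ A → Tr.obj₃ ∈ A → Tr.obj₂ ∈ A
  adj : (ObjectProperty.ι (fun X : D => X ∈ A)).IsLeftAdjoint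

/-- `(A, B)` is a compactly generated t-structure on the triangulated subcategory `S`:
it is a t-structure on `S` whose aisle is the smallest cocomplete preaisle (in `S`)
containing some collection of compact objects (of `S`). -/
def IsCompactlyGeneratedTStructureOn (S A B : Set D) : Prop :=
  IsTStructureOn S A B ∧ ∃ P : Set D, (∀ p ∈ P, IsCompactIn S p) ∧
    A = cocompletePreaisleClosureIn S P

end Tstr

/-- The strictly full closure of the image of a collection of objects under a map
on objects (e.g. a derived pullback functor). -/
def imgSet {C : Type*} {D : Type u} [Category.{v} D] (F : C → D) (A : Set C) : Set D :=
  {d : D | ∃ a ∈ A, Nonempty (d ≅ F a)}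

/-! Being a left adjoint, `j*` preserves coproducts, and being exact it preserves shifts and
triangles; so the preimage under `j*` of the cocomplete preaisle generated by `j*P` is a
cocomplete preaisle containing `P`, hence contains `A`. Conversely `j*A`, as the aisle of a
t-structure, is a cocomplete preaisle containing `j*P`. Compactness of `j*p` comes from the
natural isomorphism `Hom(j*p, -) ≅ Hom(p, j_* -)` and the fact that `j_*` preserves coproducts. -/

section Preaisles

variable {D : Type u} [Category.{v} D] [Preadditive D] [HasZeroObject D] [HasShift D ℤ]
  [∀ n : ℤ, (shiftFunctor D n).Additive] [Pretriangulated D]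

namespace IsTStructure

variable {A B : Set D}

theorem mem_aisle_of_forall_hom_eq_zero (h : IsTStructure A B) {Y : D}
    (hY : ∀ F : D, F⟦(1 : ℤ)⟧ ∈ B → ∀ g : Y ⟶ F, g = 0) : Y ∈ A := by
  obtain ⟨a, b, ha, hb, f, g, δ, hT⟩ := h.exists_triangle Y (Set.mem_univ Y)
  -- As `g = 0`, `𝟙 b` factors through `a⟦1⟧ ∈ A`, and `Hom(a⟦1⟧, b) = 0`; so `b = 0`.
  obtain ⟨r, hr⟩ := Triangle.yoneda_exact₂ _ (rot_of_distTriang _ hT) (𝟙 b)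
    (show g ≫ 𝟙 b = 0 by rw [hY b hb g, zero_comp])
  have hr_zero : r = 0 := h.hom_zero _ (h.shift_A a ha) b hb r
  have hb_zero : IsZero b := by
    rw [IsZero.iff_id_eq_zero, hr, hr_zero, comp_zero]
    rfl
  have : IsIso f := (Triangle.isZero₃_iff_isIso₁ _ hT).1 hb_zero
  exact h.iso_closed_A (asIso f) ha

theorem isCocompletePreaisleIn_aisle (h : IsTStructure A B) :
    IsCocompletePreaisleIn Set.univ A where
  subset := Set.subset_univ A
  iso_closed e _ hE := h.iso_closed_A e hE
  shift := h.shift_A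
  ext Tr hTr h₁ h₃ _ := h.mem_aisle_of_forall_hom_eq_zero fun F hF g => by
    obtain ⟨g', rfl⟩ := Triangle.yoneda_exact₂ _ hTr g (h.hom_zero _ h₁ F hF _)
    rw [h.hom_zero _ h₃ F hF g', comp_zero]
  coprod _ _ hf c hc _ := h.mem_aisle_of_forall_hom_eq_zero fun F hF g =>
    Cofan.IsColimit.hom_ext hc g 0 fun i => by
      rw [comp_zero]
      exact h.hom_zero _ (hf i) F hF _

end IsTStructure

theorem isCocompletePreaisleIn_univ : IsCocompletePreaisleIn (Set.univ : Set D) Set.univ where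
  subset := subset_rfl
  iso_closed _ h _ := h
  shift _ _ := trivial
  ext _ _ _ _ h := h
  coprod _ _ _ _ _ h := h

theorem IsCocompletePreaisleIn.sInter {S : Set D} {𝒯 : Set (Set D)} (hne : 𝒯.Nonempty)
    (h𝒯 : ∀ T ∈ 𝒯, IsCocompletePreaisleIn S T) : IsCocompletePreaisleIn S (⋂₀ 𝒯) where
  subset := let ⟨T, hT⟩ := hne; (Set.sInter_subset_of_mem hT).trans (h𝒯 T hT).subset
  iso_closed e hF hE := Set.mem_sInter.2 fun T hT => (h𝒯 T hT).iso_closed e hF (hE T hT)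
  shift E hE := Set.mem_sInter.2 fun T hT => (h𝒯 T hT).shift E (hE T hT)
  ext Tr hTr h₁ h₃ h₂ :=
    Set.mem_sInter.2 fun T hT => (h𝒯 T hT).ext Tr hTr (h₁ T hT) (h₃ T hT) h₂
  coprod ι f hf c hc hc' :=
    Set.mem_sInter.2 fun T hT => (h𝒯 T hT).coprod ι f (fun i => hf i T hT) c hc hc'

theorem subset_cocompletePreaisleClosureIn (S P : Set D) :
    P ⊆ cocompletePreaisleClosureIn S P :=
  fun _ hx => Set.mem_sInter.2 fun _ hT => hT.1 hx

theorem cocompletePreaisleClosureIn_subset {S P T : Set D} (hPT : P ⊆ T)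
    (hT : IsCocompletePreaisleIn S T) : cocompletePreaisleClosureIn S P ⊆ T :=
  Set.sInter_subset_of_mem ⟨hPT, hT⟩

theorem isCocompletePreaisleIn_cocompletePreaisleClosure (P : Set D) :
    IsCocompletePreaisleIn Set.univ (cocompletePreaisleClosure P) :=
  IsCocompletePreaisleIn.sInter ⟨Set.univ, Set.subset_univ P, isCocompletePreaisleIn_univ⟩
    fun _ hT => hT.2

end Preaisles

section ExactFunctor

variable {C : Type*} [Category.{v} C] [Preadditive C] [HasZeroObject C] [HasShift C ℤ]
  [∀ n : ℤ, (shiftFunctor C n).Additive] [Pretriangulated C]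
  {D : Type u} [Category.{v} D] [Preadditive D] [HasZeroObject D] [HasShift D ℤ]
  [∀ n : ℤ, (shiftFunctor D n).Additive] [Pretriangulated D]
  (F : C ⥤ D) [F.CommShift ℤ] [F.IsTriangulated]
  (hF : ∀ ι : Type v, PreservesColimitsOfShape (Discrete ι) F)
include hF

theorem IsCocompletePreaisleIn.preimage {W : Set D} (hW : IsCocompletePreaisleIn Set.univ W) :
    IsCocompletePreaisleIn Set.univ (F.obj ⁻¹' W) where
  subset := Set.subset_univ _
  iso_closed e _ hE := hW.iso_closed (F.mapIso e) trivial hE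
  shift E hE := hW.iso_closed ((F.commShiftIso (1 : ℤ)).app E).symm trivial (hW.shift _ hE)
  ext Tr hTr h₁ h₃ _ := hW.ext _ (F.map_distinguished Tr hTr) h₁ h₃ trivial
  coprod ι _ hf c hc _ :=
    have := hF ι
    hW.coprod ι _ hf _ (isColimitCofanMkObjOfIsColimit F _ c.inj hc) trivial

theorem imgSet_cocompletePreaisleClosure_subset (P : Set C) :
    imgSet F.obj (cocompletePreaisleClosure P) ⊆ cocompletePreaisleClosure (imgSet F.obj P) := by
  have hW := isCocompletePreaisleIn_cocompletePreaisleClosure (imgSet F.obj P)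
  have hP : cocompletePreaisleClosure P ⊆ F.obj ⁻¹' cocompletePreaisleClosure (imgSet F.obj P) :=
    cocompletePreaisleClosureIn_subset
      (fun p hp => subset_cocompletePreaisleClosureIn _ _ ⟨p, hp, ⟨Iso.refl _⟩⟩)
      (hW.preimage F hF)
  rintro d ⟨a, ha, ⟨e⟩⟩
  exact hW.iso_closed e.symm trivial (hP ha)

theorem imgSet_cocompletePreaisleClosure_eq {P : Set C} {B : Set D}
    (h : IsTStructure (imgSet F.obj (cocompletePreaisleClosure P)) B) :
    imgSet F.obj (cocompletePreaisleClosure P) = cocompletePreaisleClosure (imgSet F.obj P) :=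
  (imgSet_cocompletePreaisleClosure_subset F hF P).antisymm <|
    cocompletePreaisleClosureIn_subset
      (fun _ ⟨p, hp, e⟩ => ⟨p, subset_cocompletePreaisleClosureIn _ _ hp, e⟩)
      h.isCocompletePreaisleIn_aisle

end ExactFunctor

section Compactness

variable {C : Type*} [Category.{v} C] [Preadditive C] {D : Type u} [Category.{v} D] [Preadditive D]

theorem IsCompactObj.of_bijective_comp_map {G : D ⥤ C} [G.Additive]
    (hG : ∀ ι : Type v, PreservesColimitsOfShape (Discrete ι) G) {p : C} {q : D}
    (u : p ⟶ G.obj q) (hu : ∀ Y : D, Function.Bijective fun g : q ⟶ Y => u ≫ G.map g)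
    (hp : IsCompactObj p) : IsCompactObj q := by
  refine ⟨trivial, fun ι f _ c hc _ => ?_⟩
  have := hG ι
  obtain ⟨hdecomp, hindep⟩ := hp.2 ι (fun i => G.obj (f i)) (fun _ => trivial) _
    (isColimitCofanMkObjOfIsColimit G _ c.inj hc) trivial
  have transport : ∀ (s : Finset ι) (k : (i : ι) → (q ⟶ f i)),
      u ≫ G.map (∑ i ∈ s, k i ≫ c.inj i) = ∑ i ∈ s, (u ≫ G.map (k i)) ≫ G.map (c.inj i) := by
    intro s k
    simp only [Functor.map_sum, Functor.map_comp, Preadditive.comp_sum, Category.assoc]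
  constructor
  · intro g
    obtain ⟨s, k, hk⟩ := hdecomp (u ≫ G.map g)
    choose k' hk' using fun i => (hu (f i)).2 (k i)
    refine ⟨s, k', (hu c.pt).1 ?_⟩
    simp only [transport, hk', hk, cofan_mk_inj]
  · intro s k hk i hi
    have hsum := hindep s (fun i => u ≫ G.map (k i))
      (by simpa [hk] using (transport s k).symm) i hi
    exact (hu (f i)).1 (by simpa using hsum)

theorem IsCompactObj.of_iso_obj_leftAdjoint {F : C ⥤ D} {G : D ⥤ C} [F.Additive] (adj : F ⊣ G)
    (hG : ∀ ι : Type v, PreservesColimitsOfShape (Discrete ι) G) {p : C} {q : D}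
    (e : q ≅ F.obj p) (hp : IsCompactObj p) : IsCompactObj q :=
  have := adj.right_adjoint_additive
  hp.of_bijective_comp_map hG (adj.unit.app p ≫ G.map e.inv) fun Y => by
    have : (fun g : q ⟶ Y => (adj.unit.app p ≫ G.map e.inv) ≫ G.map g) =
        adj.homEquiv p Y ∘ e.homCongr (Iso.refl Y) := by
      ext g
      simp [Adjunction.homEquiv_unit]
    rw [this]
    exact (adj.homEquiv p Y).bijective.comp (e.homCongr (Iso.refl Y)).bijective

end Compactness

theorem statement12
    (T : Type u) [Category.{v} T] [Preadditive T] [HasZeroObject T] [HasShift T ℤ]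
    [∀ n : ℤ, (shiftFunctor T n).Additive] [Pretriangulated T]
    (S : Type u) [Category.{v} S] [Preadditive S] [HasZeroObject S] [HasShift S ℤ]
    [∀ n : ℤ, (shiftFunctor S n).Additive] [Pretriangulated S]
    (jstar : T ⥤ S) [jstar.CommShift ℤ] [jstar.IsTriangulated] [jstar.EssSurj]
    (jlow : S ⥤ T) [jlow.Full] [jlow.Faithful] [jlow.CommShift ℤ] [jlow.IsTriangulated]
    (adj : jstar ⊣ jlow)
    (hpres : ∀ ι : Type v, PreservesColimitsOfShape (Discrete ι) jlow)
    (A B : Set T) (hAB : IsTStructure A B)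
    (himg : IsTStructure (imgSet jstar.obj A) (imgSet jstar.obj B)) :
    ((∃ P : Set T, (∀ p ∈ P, IsCompactObj p) ∧ A = cocompletePreaisleClosure P) →
      ∃ Q : Set S, (∀ q ∈ Q, IsCompactObj q) ∧
        imgSet jstar.obj A = cocompletePreaisleClosure Q) ∧
    (∀ P : Set T, (∀ p ∈ P, IsCompactObj p) → A = cocompletePreaisleClosure P →
      (∀ q ∈ imgSet jstar.obj P, IsCompactObj q) ∧
        imgSet jstar.obj A = cocompletePreaisleClosure (imgSet jstar.obj P)) := by
  have hjstar : ∀ ι : Type v, PreservesColimitsOfShape (Discrete ι) jstar := fun _ =>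
    have := adj.leftAdjoint_preservesColimits
    inferInstance
  have generated_by_image : ∀ P : Set T, (∀ p ∈ P, IsCompactObj p) →
      A = cocompletePreaisleClosure P →
      (∀ q ∈ imgSet jstar.obj P, IsCompactObj q) ∧
        imgSet jstar.obj A = cocompletePreaisleClosure (imgSet jstar.obj P) := by
    rintro P hP rfl
    refine ⟨?_, imgSet_cocompletePreaisleClosure_eq jstar hjstar himg⟩
    rintro q ⟨p, hp, ⟨e⟩⟩
    exact (hP p hp).of_iso_obj_leftAdjoint adj hpres e
  exact ⟨fun ⟨P, hP, hAP⟩ => ⟨_, generated_by_image P hP hAP⟩, generated_by_image⟩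
end

section
/- Let X be a Noetherian scheme, Z a closed subset of X, and φ a Thomason filtration on X. The following are equivalent: (1) φ satisfies the weak Cousin condition across Z; (2) for every affine open subscheme U of X with Z∩U nonempty, φ∩U satisfies the weak Cousin condition across Z∩U; (3) for every point s in Z, the restriction φ_s of φ to Spec(O_{X,s}) satisfies the weak Cousin condition across Z∩Spec(O_{X,s}). -/
open CategoryTheory Limits Pretriangulated AlgebraicGeometry

universe v u
section Topology

variable {X : Type u} [TopologicalSpace X]

/-- A Thomason filtration on a (Noetherian) topological space: a decreasing
`ℤ`-indexed family of specialization-closed (= Thomason, in the Noetherian case) subsets. -/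
structure ThomasonFiltration (X : Type u) [TopologicalSpace X] where
  toFun : ℤ → Set X
  stable : ∀ n, StableUnderSpecialization (toFun n)
  antitone : ∀ n, toFun (n + 1) ⊆ toFun n

/-- `p ⤳ q` is a direct generalization: `p ≠ q` and there is no strictly intermediate point. -/
def DirectGen (p q : X) : Prop :=
  p ⤳ q ∧ p ≠ q ∧ ∀ s : X, p ⤳ s → s ⤳ q → s = p ∨ s = q

/-- A Thomason filtration `φ` is weak Cousin across a subset `Z`: for every direct
generalization `p ⤳ q` with `p, q ∈ Z` and `q ∈ φ(n)`, one has `p ∈ φ(n-1)`. -/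
def WeakCousinAcross (φ : ThomasonFiltration X) (Z : Set X) : Prop :=
  ∀ p q : X, DirectGen p q → p ∈ Z → q ∈ Z → ∀ n : ℤ, q ∈ φ.toFun n → p ∈ φ.toFun (n - 1)

/-- `φ` is constant on a subset `S`: `φ(n) ∩ S` equals `S` for all `n` or `∅` for all `n`. -/
def ThomasonFiltration.ConstantOn (φ : ThomasonFiltration X) (S : Set X) : Prop :=
  (∀ n, φ.toFun n ∩ S = S) ∨ (∀ n, φ.toFun n ∩ S = ∅)

/-- The restriction of a Thomason filtration to a subspace. -/
def ThomasonFiltration.restrictTo (φ : ThomasonFiltration X) (S : Set X) :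
    ThomasonFiltration S where
  toFun n := Subtype.val ⁻¹' φ.toFun n
  stable n := fun _ _ h hx => φ.stable n (h.map continuous_subtype_val) hx
  antitone n := fun _ hx => φ.antitone n hx

/-- The intersection `φ ∩ Z` of a Thomason filtration with a specialization-closed
subset `Z`, as a Thomason filtration on the ambient space. -/
def ThomasonFiltration.inter (φ : ThomasonFiltration X) (Z : Set X)
    (hZ : StableUnderSpecialization Z) : ThomasonFiltration X where
  toFun n := φ.toFun n ∩ Z
  stable n := fun _ _ h hx => ⟨φ.stable n h hx.1, hZ h hx.2⟩
  antitone n := fun _ hx => ⟨φ.antitone n hx.1, hx.2⟩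

end Topology

/-! The weak Cousin condition only involves direct generalizations `p ⤳ q`, and these stay
direct inside any generalization-closed set containing `q`, such as an open set or the set of
generalizations of a point. Hence the condition can be checked on any cover of `Z` by such
sets, e.g. by affine opens meeting `Z` or by the local schemes `Spec O_{X,s}`, `s ∈ Z`. -/

section

variable {X : Type u} [TopologicalSpace X]

lemma directGen_subtype_iff {S : Set X} (hS : StableUnderGeneralization S) {p q : S} :
    DirectGen p q ↔ DirectGen (p : X) q := by
  simp only [DirectGen, subtype_specializes_iff, ne_eq, Subtype.ext_iff, Subtype.forall]
  exact and_congr_right fun hpq => and_congr_right fun _ =>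
    ⟨fun h s hps hsq => h s (hS hsq q.2) hps hsq, fun h s _ => h s⟩

lemma ThomasonFiltration.weakCousinAcross_iff_forall_restrictTo {ι : Type*}
    (φ : ThomasonFiltration X) {Z : Set X} (S : ι → Set X)
    (hS : ∀ i, StableUnderGeneralization (S i)) (hcover : ∀ q ∈ Z, ∃ i, q ∈ S i) :
    WeakCousinAcross φ Z ↔ ∀ i, WeakCousinAcross (φ.restrictTo (S i)) (Subtype.val ⁻¹' Z) := by
  constructor
  · intro h i p q hpq hp hq n hqn
    exact h p q ((directGen_subtype_iff (hS i)).mp hpq) hp hq n hqn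
  · intro h p q hpq hp hq n hqn
    obtain ⟨i, hqi⟩ := hcover q hq
    have hpi : p ∈ S i := hS i hpq.1 hqi
    exact h i ⟨p, hpi⟩ ⟨q, hqi⟩ ((directGen_subtype_iff (hS i)).mpr hpq) hp hq n hqn

end

theorem statement15_general (X : Scheme.{u})
    (Z : Set X) (φ : ThomasonFiltration X) :
    (WeakCousinAcross φ Z ↔
      ∀ U : X.Opens, IsAffineOpen U → (Z ∩ (U : Set X)).Nonempty →
        WeakCousinAcross (φ.restrictTo (U : Set X)) (Subtype.val ⁻¹' Z)) ∧
    (WeakCousinAcross φ Z ↔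
      ∀ s : X, s ∈ Z →
        WeakCousinAcross (φ.restrictTo {q : X | q ⤳ s}) (Subtype.val ⁻¹' Z)) := by
  have affine_cover : ∀ q ∈ Z,
      ∃ U : {U : X.Opens // IsAffineOpen U ∧ (Z ∩ (U : Set X)).Nonempty}, q ∈ (U.1 : Set X) := by
    intro q hq
    obtain ⟨_, ⟨U, hU, rfl⟩, hqU, -⟩ :=
      X.isBasis_affineOpens.exists_subset_of_mem_open (Set.mem_univ q) isOpen_univ
    exact ⟨⟨U, hU, q, hq, hqU⟩, hqU⟩
  have local_cover : ∀ q ∈ Z, ∃ s : Z, q ∈ {x : X | x ⤳ s} :=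
    fun q hq => ⟨⟨q, hq⟩, specializes_refl q⟩
  constructor
  · rw [φ.weakCousinAcross_iff_forall_restrictTo _
      (fun U => U.1.isOpen.stableUnderGeneralization) affine_cover]
    exact ⟨fun h U hU hZU => h ⟨U, hU, hZU⟩, fun h U => h U.1 U.2.1 U.2.2⟩
  · rw [φ.weakCousinAcross_iff_forall_restrictTo (fun s : Z => {x : X | x ⤳ s})
      (fun _ _ _ hyx hx => hyx.trans hx) local_cover]
    exact ⟨fun h s hs => h ⟨s, hs⟩, fun h s => h s s.2⟩

theorem statement15 (X : Scheme.{u}) [IsNoetherian X]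
    (Z : Set X) (hZ : IsClosed Z) (φ : ThomasonFiltration X) :
    (WeakCousinAcross φ Z ↔
      ∀ U : X.Opens, IsAffineOpen U → (Z ∩ (U : Set X)).Nonempty →
        WeakCousinAcross (φ.restrictTo (U : Set X)) (Subtype.val ⁻¹' Z)) ∧
    (WeakCousinAcross φ Z ↔
      ∀ s : X, s ∈ Z →
        WeakCousinAcross (φ.restrictTo {q : X | q ⤳ s}) (Subtype.val ⁻¹' Z)) :=
  statement15_general X Z φ
end
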